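/- Let P be a maximal ranked poset of rank n and let A and B be antichains of P with A ≠ B. Then the pair {A, B} belongs to E*_C(P) if and only if there exists ℓ with 1 ≤ ℓ ≤ n such that (after possibly swapping A and B) A = P_{ℓ−1}, B ⊆ P_ℓ, and |B| ≥ 2. -/

import Mathlib

open Finset
open scoped Classical

variable (P : Type*) [Fintype P] [PartialOrder P]

/-- The comparability graph of a poset. -/
def compGraph : SimpleGraph P where
  Adj x y := x ≠ y ∧ (x ≤ y ∨ y ≤ x)
  symm := ⟨fun _ _ h => ⟨h.1.symm, h.2.symm⟩⟩
  loopless := ⟨fun _ h => h.1 rfl⟩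

/-- A subset `W` of `P` is connected in `P` if the subgraph of the comparability
graph induced on `W` is connected (this includes `W` being nonempty). -/
def ConnIn (W : Set P) : Prop :=
  (SimpleGraph.induce W (compGraph P)).Connected

/-- A poset ideal (down-set). -/
def IsIdealF (I : Finset P) : Prop :=
  ∀ ⦃x y : P⦄, x ∈ I → y ≤ x → y ∈ I

/-- An antichain of the poset. -/
def IsAntichainF (A : Finset P) : Prop :=
  IsAntichain (· ≤ ·) (↑A : Set P)

/-- The 0/1 indicator vector of a subset of `P`. -/
noncomputable def rho (W : Finset P) : P → ℝ :=
  fun x => if x ∈ W then 1 else 0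

/-- The order polytope of `P`. -/
def orderPolytope : Set (P → ℝ) :=
  {f | (∀ x, 0 ≤ f x ∧ f x ≤ 1) ∧ ∀ ⦃x y : P⦄, x ≤ y → f y ≤ f x}

/-- The chain polytope of `P`. -/
def chainPolytope : Set (P → ℝ) :=
  {f | (∀ x, 0 ≤ f x) ∧ ∀ s : Finset P, IsChain (· ≤ ·) (↑s : Set P) → ∑ x ∈ s, f x ≤ 1}

/-- `conv {u, v}` is an edge (1-dimensional exposed face) of the polytope `S`. -/
def IsEdgeOf (S : Set (P → ℝ)) (u v : P → ℝ) : Prop :=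
  u ≠ v ∧ IsExposed ℝ S (convexHull ℝ {u, v})

/-- `conv {u, v, w}` is a triangular 2-face of the polytope `S`. -/
def IsTriFaceOf (S : Set (P → ℝ)) (u v w : P → ℝ) : Prop :=
  u ≠ v ∧ u ≠ w ∧ v ≠ w ∧ IsExposed ℝ S (convexHull ℝ {u, v, w})

/-- The set of maximal elements of a subset of `P`. -/
noncomputable def maxSet (W : Finset P) : Finset P :=
  W.filter (fun x => ∀ y ∈ W, ¬ x < y)

/-- The set of minimal elements of a subset of `P`. -/
noncomputable def minSet (W : Finset P) : Finset P :=
  W.filter (fun x => ∀ y ∈ W, ¬ y < x)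

/-- The poset ideal generated by a subset of `P`. -/
noncomputable def genIdeal (A : Finset P) : Finset P :=
  univ.filter (fun x => ∃ a ∈ A, x ≤ a)

/-- The pair `{I, J}` belongs to `E*_O(P)`. -/
noncomputable def EstarO (I J : Finset P) : Prop :=
  IsIdealF P I ∧ IsIdealF P J ∧ I ≠ J ∧
    IsEdgeOf P (orderPolytope P) (rho P I) (rho P J) ∧
    ¬ IsEdgeOf P (chainPolytope P) (rho P (maxSet P I)) (rho P (maxSet P J))

/-- The pair `{A, B}` belongs to `E*_C(P)`. -/
noncomputable def EstarC (A B : Finset P) : Prop :=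
  IsAntichainF P A ∧ IsAntichainF P B ∧ A ≠ B ∧
    IsEdgeOf P (chainPolytope P) (rho P A) (rho P B) ∧
    ¬ IsEdgeOf P (orderPolytope P) (rho P (genIdeal P A)) (rho P (genIdeal P B))

/-- `Δ_O(P)`: unordered triples of pairwise distinct poset ideals spanning a
triangular 2-face of the order polytope. -/
def DeltaO : Set (Finset (Finset P)) :=
  {T | ∃ I J K : Finset P, T = {I, J, K} ∧ I ≠ J ∧ I ≠ K ∧ J ≠ K ∧
    IsIdealF P I ∧ IsIdealF P J ∧ IsIdealF P K ∧
    IsTriFaceOf P (orderPolytope P) (rho P I) (rho P J) (rho P K)}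

/-- `Δ_C(P)`: unordered triples of pairwise distinct antichains spanning a
triangular 2-face of the chain polytope. -/
def DeltaC : Set (Finset (Finset P)) :=
  {T | ∃ A B C : Finset P, T = {A, B, C} ∧ A ≠ B ∧ A ≠ C ∧ B ≠ C ∧
    IsAntichainF P A ∧ IsAntichainF P B ∧ IsAntichainF P C ∧
    IsTriFaceOf P (chainPolytope P) (rho P A) (rho P B) (rho P C)}

/-- `Δ*_O(P)`: triples in `Δ_O(P)` at least one of whose pairs lies in `E*_O(P)`. -/
def DeltaStarO : Set (Finset (Finset P)) :=
  {T | T ∈ DeltaO P ∧ ∃ I ∈ T, ∃ J ∈ T, I ≠ J ∧ EstarO P I J}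

/-- `Δ*_C(P)`: triples in `Δ_C(P)` at least one of whose pairs lies in `E*_C(P)`. -/
def DeltaStarC : Set (Finset (Finset P)) :=
  {T | T ∈ DeltaC P ∧ ∃ A ∈ T, ∃ B ∈ T, A ≠ B ∧ EstarC P A B}

/-- `r` is a rank function exhibiting `P` as a maximal ranked poset of rank `n`:
`r` is surjective onto `{0, …, n}` and `x < y ↔ r x < r y`. -/
def IsMaxRanked (r : P → ℕ) (n : ℕ) : Prop :=
  (∀ x, r x ≤ n) ∧ (∀ i, i ≤ n → ∃ x, r x = i) ∧ (∀ x y : P, x < y ↔ r x < r y)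

/-- The rank level `P_i`. -/
noncomputable def level (r : P → ℕ) (i : ℕ) : Finset P :=
  univ.filter (fun x => r x = i)

/-- `P` contains an `X`-poset as a subposet. -/
def ContainsX : Prop :=
  ∃ a b c d e : P,
    a ≠ b ∧ a ≠ c ∧ a ≠ d ∧ a ≠ e ∧ b ≠ c ∧ b ≠ d ∧ b ≠ e ∧ c ≠ d ∧ c ≠ e ∧ d ≠ e ∧
    a < c ∧ b < c ∧ c < d ∧ c < e ∧ ¬ a ≤ b ∧ ¬ b ≤ a ∧ ¬ d ≤ e ∧ ¬ e ≤ d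

set_option linter.unusedSectionVars false

section Aux

variable {P : Type*} [Fintype P] [PartialOrder P]

lemma rho_inj {A B : Finset P} (h : rho P A = rho P B) : A = B := by
  ext z
  have := congrFun h z
  by_cases hA : z ∈ A <;> by_cases hB : z ∈ B <;> simp [rho, hA, hB] at this ⊢

lemma rho_eq_segment {A B W : Finset P}
    (h : rho P W ∈ segment ℝ (rho P A) (rho P B)) : W = A ∨ W = B := by
  obtain ⟨a, b, ha, hb, hab, heq⟩ := h
  by_cases hAB : A = B
  · subst hAB
    left; apply rho_inj
    rw [← heq, ← add_smul, hab, one_smul]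
  · have hex : ∃ z, (z ∈ A ∧ z ∉ B) ∨ (z ∈ B ∧ z ∉ A) := by
      by_contra hc
      push_neg at hc
      exact hAB (Finset.ext fun z => ⟨(hc z).1, (hc z).2⟩)
    obtain ⟨z, hz⟩ := hex
    have hval := congrFun heq z
    simp only [Pi.add_apply, Pi.smul_apply, smul_eq_mul] at hval
    rcases hz with ⟨h1, h2⟩ | ⟨h1, h2⟩
    · simp only [rho, h1, h2, if_true, if_false, mul_one, mul_zero, add_zero] at hval
      by_cases hw : z ∈ W
      · rw [if_pos hw] at hval
        have hb0 : b = 0 := by linarith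
        left; apply rho_inj
        rw [← heq, hval, hb0]; simp
      · rw [if_neg hw] at hval
        have hb1 : b = 1 := by linarith
        right; apply rho_inj
        rw [← heq, hval, hb1]; simp
    · simp only [rho, h1, h2, if_true, if_false, mul_one, mul_zero, zero_add] at hval
      by_cases hw : z ∈ W
      · rw [if_pos hw] at hval
        have ha0 : a = 0 := by linarith
        right; apply rho_inj
        rw [← heq, hval, ha0]; simp
      · rw [if_neg hw] at hval
        have ha1 : a = 1 := by linarith
        left; apply rho_inj
        rw [← heq, hval, ha1]; simp

end Aux
section Aux2

variable {P : Type*} [Fintype P] [PartialOrder P]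

lemma edge_symm {S : Set (P → ℝ)} {u v : P → ℝ} (h : IsEdgeOf P S u v) :
    IsEdgeOf P S v u := ⟨h.1.symm, by have := h.2; rwa [Set.pair_comm] at this⟩

lemma not_edge_of_decomp {S : Set (P → ℝ)} {A B W1 W2 : Finset P}
    (h1 : rho P W1 ∈ S) (h2 : rho P W2 ∈ S)
    (hsum : ∀ x, rho P W1 x + rho P W2 x = rho P A x + rho P B x)
    (hW1A : W1 ≠ A) (hW1B : W1 ≠ B) :
    ¬ IsEdgeOf P S (rho P A) (rho P B) := by
  rintro ⟨hne, hexp⟩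
  obtain ⟨l, hl⟩ := hexp ⟨rho P A, subset_convexHull ℝ _ (by simp)⟩
  have hAF : rho P A ∈ convexHull ℝ {rho P A, rho P B} :=
    subset_convexHull ℝ _ (by simp)
  have hBF : rho P B ∈ convexHull ℝ {rho P A, rho P B} :=
    subset_convexHull ℝ _ (by simp)
  rw [hl] at hAF hBF
  obtain ⟨hAS, hAmax⟩ := hAF
  obtain ⟨hBS, hBmax⟩ := hBF
  have hlsum : l (rho P W1) + l (rho P W2) = l (rho P A) + l (rho P B) := by
    rw [← map_add, ← map_add]
    congr 1
    funext x
    exact hsum x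
  have hBA : l (rho P B) = l (rho P A) := le_antisymm (hAmax _ hBS) (hBmax _ hAS)
  have e1 : l (rho P W1) ≤ l (rho P A) := hAmax _ h1
  have e2 : l (rho P W2) ≤ l (rho P A) := hAmax _ h2
  have e4 : l (rho P W1) = l (rho P A) := by linarith
  have hmem : rho P W1 ∈ convexHull ℝ {rho P A, rho P B} := by
    rw [hl]
    exact ⟨h1, fun y hy => by calc l y ≤ l (rho P A) := hAmax y hy
                                  _ = l (rho P W1) := e4.symm⟩
  rw [convexHull_pair] at hmem
  rcases rho_eq_segment hmem with h | h
  · exact hW1A h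
  · exact hW1B h

lemma subset_antichain_chain_card {A s : Finset P} (hA : IsAntichainF P A)
    (hs : IsChain (· ≤ ·) (↑s : Set P)) : (s.filter (· ∈ A)).card ≤ 1 := by
  rw [Finset.card_le_one]
  intro a ha b hb
  simp only [Finset.mem_filter] at ha hb
  by_contra hne
  rcases hs ha.1 hb.1 hne with h | h
  · exact hA ha.2 hb.2 hne h
  · exact hA hb.2 ha.2 (Ne.symm hne) h

lemma rho_antichain_mem {A : Finset P} (hA : IsAntichainF P A) :
    rho P A ∈ chainPolytope P := by
  constructor
  · intro x; unfold rho; split <;> norm_num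
  · intro s hs
    have : ∑ x ∈ s, rho P A x = ((s.filter (· ∈ A)).card : ℝ) := by
      rw [Finset.card_filter]
      push_cast
      exact Finset.sum_congr rfl fun x _ => by unfold rho; split <;> simp_all
    rw [this]
    exact_mod_cast subset_antichain_chain_card hA hs

lemma rho_ideal_mem {I : Finset P} (hI : IsIdealF P I) :
    rho P I ∈ orderPolytope P := by
  refine ⟨fun x => by unfold rho; split <;> norm_num, fun x y hxy => ?_⟩
  unfold rho
  by_cases hy : y ∈ I
  · rw [if_pos hy, if_pos (hI hy hxy)]
  · rw [if_neg hy]; split <;> norm_num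

lemma convex_chainPolytope : Convex ℝ (chainPolytope P) := by
  intro f hf g hg a b ha hb hab
  refine ⟨fun x => add_nonneg (mul_nonneg ha (hf.1 x)) (mul_nonneg hb (hg.1 x)),
    fun s hs => ?_⟩
  have hsum : ∑ x ∈ s, (a • f + b • g) x = a * ∑ x ∈ s, f x + b * ∑ x ∈ s, g x := by
    simp [Finset.mul_sum, Finset.sum_add_distrib]
  rw [hsum]
  have h1 := hf.2 s hs
  have h2 := hg.2 s hs
  nlinarith
lemma convex_orderPolytope : Convex ℝ (orderPolytope P) := by
  intro f hf g hg a b ha hb hab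
  refine ⟨fun x => ⟨add_nonneg (mul_nonneg ha (hf.1 x).1) (mul_nonneg hb (hg.1 x).1), ?_⟩,
    fun x y hxy => ?_⟩
  · have h1 := (hf.1 x).2
    have h2 := (hg.1 x).2
    simp only [Pi.add_apply, Pi.smul_apply, smul_eq_mul]
    nlinarith
  · have h1 := hf.2 hxy
    have h2 := hg.2 hxy
    simp only [Pi.add_apply, Pi.smul_apply, smul_eq_mul]
    nlinarith

lemma isEdge_of_functional {S : Set (P → ℝ)} {A B : Finset P}
    (l : (P → ℝ) →L[ℝ] ℝ) (M : ℝ)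
    (hAS : rho P A ∈ S) (hBS : rho P B ∈ S) (hconv : Convex ℝ S)
    (hAB : rho P A ≠ rho P B)
    (hlA : l (rho P A) = M) (hlB : l (rho P B) = M)
    (hub : ∀ f ∈ S, l f ≤ M)
    (hmax : ∀ f ∈ S, l f = M → f ∈ segment ℝ (rho P A) (rho P B)) :
    IsEdgeOf P S (rho P A) (rho P B) := by
  refine ⟨hAB, fun _ => ⟨l, ?_⟩⟩
  rw [convexHull_pair]
  ext f
  constructor
  · intro hf
    obtain ⟨a, b, ha, hb, hab, heq⟩ := hf
    have hfS : f ∈ S := heq ▸ hconv hAS hBS ha hb hab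
    have hlf : l f = M := by
      rw [← heq, map_add, map_smul, map_smul, hlA, hlB, smul_eq_mul, smul_eq_mul,
        ← add_mul, hab, one_mul]
    exact ⟨hfS, fun y hy => (hub y hy).trans hlf.ge⟩
  · rintro ⟨hfS, hm⟩
    exact hmax f hfS (le_antisymm (hub f hfS) (hlA ▸ hm _ hAS))

end Aux2
section Aux3

variable {P : Type*} [Fintype P] [PartialOrder P]

noncomputable def projP (x : P) : (P → ℝ) →L[ℝ] ℝ :=
  ContinuousLinearMap.proj x

@[simp] lemma projP_apply (x : P) (f : P → ℝ) : projP (P := P) x f = f x := rfl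

lemma pair_sum_le {f : P → ℝ} (hf : f ∈ chainPolytope P) {x y : P} (hxy : x < y) :
    f x + f y ≤ 1 := by
  have hchain : IsChain (· ≤ ·) (↑({x, y} : Finset P) : Set P) := by
    intro a ha b hb hne
    simp only [Finset.coe_insert, Finset.coe_singleton, Set.mem_insert_iff,
      Set.mem_singleton_iff] at ha hb
    rcases ha with rfl | rfl <;> rcases hb with rfl | rfl <;>
      first | exact absurd rfl hne | exact Or.inl hxy.le | exact Or.inr hxy.le
  have := hf.2 {x, y} hchain
  rwa [Finset.sum_pair hxy.ne] at this

lemma edgeC_of {A B : Finset P} (hA : IsAntichainF P A) (hB : IsAntichainF P B)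
    (hAne : A.Nonempty) (hBne : B.Nonempty)
    (hdisj : ∀ x ∈ A, x ∉ B)
    (hltAB : ∀ x ∈ A, ∀ y ∈ B, x < y) :
    IsEdgeOf P (chainPolytope P) (rho P A) (rho P B) := by
  obtain ⟨a0, ha0⟩ := hAne
  obtain ⟨b0, hb0⟩ := hBne
  set l : (P → ℝ) →L[ℝ] ℝ :=
    (∑ x ∈ A, ∑ y ∈ B, (projP x + projP y)) - ∑ z ∈ (A ∪ B)ᶜ, projP z with hldef
  have hlev : ∀ f : P → ℝ, l f = (∑ x ∈ A, ∑ y ∈ B, (f x + f y)) - ∑ z ∈ (A ∪ B)ᶜ, f z := by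
    intro f
    simp [hldef, ContinuousLinearMap.sum_apply]
  set M : ℝ := (A.card : ℝ) * B.card with hM
  have hslack : ∀ f : P → ℝ,
      M - l f = (∑ x ∈ A, ∑ y ∈ B, (1 - (f x + f y))) + ∑ z ∈ (A ∪ B)ᶜ, f z := by
    intro f
    rw [hlev]
    have : ∑ x ∈ A, ∑ y ∈ B, (1 - (f x + f y))
        = (∑ x ∈ A, ∑ y ∈ B, (1 : ℝ)) - ∑ x ∈ A, ∑ y ∈ B, (f x + f y) := by
      rw [← Finset.sum_sub_distrib]
      exact Finset.sum_congr rfl fun x _ => by rw [← Finset.sum_sub_distrib]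
    rw [this]
    simp [hM]
    ring
  have hub : ∀ f ∈ chainPolytope P, l f ≤ M := by
    intro f hf
    have h1 : 0 ≤ ∑ x ∈ A, ∑ y ∈ B, (1 - (f x + f y)) :=
      Finset.sum_nonneg fun x hx => Finset.sum_nonneg fun y hy => by
        have := pair_sum_le hf (hltAB x hx y hy); linarith
    have h2 : 0 ≤ ∑ z ∈ (A ∪ B)ᶜ, f z := Finset.sum_nonneg fun z _ => hf.1 z
    have := hslack f
    linarith
  have hlA : l (rho P A) = M := by
    rw [hlev]
    have e1 : ∀ x ∈ A, ∀ y ∈ B, rho P A x + rho P A y = 1 := by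
      intro x hx y hy
      unfold rho
      rw [if_pos hx, if_neg (fun h => hdisj y h hy)]
      norm_num
    have e2 : ∀ z ∈ (A ∪ B)ᶜ, rho P A z = 0 := by
      intro z hz
      simp only [Finset.mem_compl, Finset.mem_union] at hz
      push_neg at hz
      unfold rho
      rw [if_neg hz.1]
    rw [Finset.sum_eq_zero e2, sub_zero, hM]
    rw [Finset.sum_congr rfl fun x hx => Finset.sum_congr rfl (e1 x hx)]
    simp [mul_comm]
  have hlB : l (rho P B) = M := by
    rw [hlev]
    have e1 : ∀ x ∈ A, ∀ y ∈ B, rho P B x + rho P B y = 1 := by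
      intro x hx y hy
      unfold rho
      rw [if_neg (hdisj x hx), if_pos hy]
      norm_num
    have e2 : ∀ z ∈ (A ∪ B)ᶜ, rho P B z = 0 := by
      intro z hz
      simp only [Finset.mem_compl, Finset.mem_union] at hz
      push_neg at hz
      unfold rho
      rw [if_neg hz.2]
    rw [Finset.sum_eq_zero e2, sub_zero, hM]
    rw [Finset.sum_congr rfl fun x hx => Finset.sum_congr rfl (e1 x hx)]
    simp [mul_comm]
  have hABne : rho P A ≠ rho P B := by
    intro h
    exact hdisj a0 ha0 (by rw [rho_inj h] at ha0; exact ha0)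
  refine isEdge_of_functional l M (rho_antichain_mem hA) (rho_antichain_mem hB)
    convex_chainPolytope hABne hlA hlB hub ?_
  intro f hf hlf
  -- extract structure of maximizers
  have h1 : 0 ≤ ∑ x ∈ A, ∑ y ∈ B, (1 - (f x + f y)) :=
    Finset.sum_nonneg fun x hx => Finset.sum_nonneg fun y hy => by
      have := pair_sum_le hf (hltAB x hx y hy); linarith
  have h2 : 0 ≤ ∑ z ∈ (A ∪ B)ᶜ, f z := Finset.sum_nonneg fun z _ => hf.1 z
  have hs := hslack f
  rw [hlf] at hs
  have hz1 : ∑ x ∈ A, ∑ y ∈ B, (1 - (f x + f y)) = 0 := by linarith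
  have hz2 : ∑ z ∈ (A ∪ B)ᶜ, f z = 0 := by linarith
  have hpair : ∀ x ∈ A, ∀ y ∈ B, f x + f y = 1 := by
    intro x hx y hy
    have houter := (Finset.sum_eq_zero_iff_of_nonneg fun x hx =>
      Finset.sum_nonneg fun y hy => by
        have := pair_sum_le hf (hltAB x hx y hy); linarith).mp hz1 x hx
    have hinner := (Finset.sum_eq_zero_iff_of_nonneg fun y hy => by
      have := pair_sum_le hf (hltAB x hx y hy); linarith).mp houter y hy
    linarith
  have hzero : ∀ z, z ∉ A → z ∉ B → f z = 0 := by
    intro z hzA hzB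
    exact (Finset.sum_eq_zero_iff_of_nonneg fun z _ => hf.1 z).mp hz2 z
      (by simp [Finset.mem_compl, hzA, hzB])
  set s : ℝ := f a0 with hsdef
  set t : ℝ := f b0 with htdef
  have hst : s + t = 1 := hpair a0 ha0 b0 hb0
  have hfa : ∀ x ∈ A, f x = s := by
    intro x hx
    have := hpair x hx b0 hb0
    linarith
  have hfb : ∀ y ∈ B, f y = t := by
    intro y hy
    have := hpair a0 ha0 y hy
    linarith
  refine ⟨s, t, hf.1 a0, hf.1 b0, hst, ?_⟩
  funext z
  simp only [Pi.add_apply, Pi.smul_apply, smul_eq_mul]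
  by_cases hzA : z ∈ A
  · rw [hfa z hzA]
    unfold rho
    rw [if_pos hzA, if_neg (hdisj z hzA)]
    ring
  · by_cases hzB : z ∈ B
    · rw [hfb z hzB]
      unfold rho
      rw [if_neg hzA, if_pos hzB]
      ring
    · rw [hzero z hzA hzB]
      unfold rho
      rw [if_neg hzA, if_neg hzB]
      ring

end Aux3
section Aux4

variable {P : Type*} [Fintype P] [PartialOrder P]

lemma edgeO_of {I J : Finset P} (hI : IsIdealF P I) (hJ : IsIdealF P J)
    (hIJ : I ⊆ J) (z : P) (hz : z ∈ J \ I)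
    (hconn : ∀ x ∈ J \ I, ∃ w ∈ J \ I,
      (x = w ∨ x < w ∨ w < x) ∧ (w = z ∨ w < z ∨ z < w)) :
    IsEdgeOf P (orderPolytope P) (rho P I) (rho P J) := by
  set D : Finset P := J \ I with hD
  set l : (P → ℝ) →L[ℝ] ℝ :=
    (∑ x ∈ I, projP x) - (∑ x ∈ Jᶜ, projP x)
      - ∑ x ∈ D, ∑ y ∈ D.filter (fun y => x < y), (projP x - projP y) with hldef
  have hlev : ∀ f : P → ℝ, l f = (∑ x ∈ I, f x) - (∑ x ∈ Jᶜ, f x)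
      - ∑ x ∈ D, ∑ y ∈ D.filter (fun y => x < y), (f x - f y) := by
    intro f
    simp [hldef, ContinuousLinearMap.sum_apply]
  set M : ℝ := (I.card : ℝ) with hM
  have hslack : ∀ f : P → ℝ,
      M - l f = (∑ x ∈ I, (1 - f x)) + (∑ x ∈ Jᶜ, f x)
        + ∑ x ∈ D, ∑ y ∈ D.filter (fun y => x < y), (f x - f y) := by
    intro f
    rw [hlev]
    have : ∑ x ∈ I, (1 - f x) = (I.card : ℝ) - ∑ x ∈ I, f x := by
      rw [Finset.sum_sub_distrib, Finset.sum_const, nsmul_eq_mul, mul_one]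
    rw [this, hM]
    ring
  have hnn : ∀ f ∈ orderPolytope P,
      0 ≤ ∑ x ∈ I, (1 - f x) ∧ 0 ≤ ∑ x ∈ Jᶜ, f x ∧
      0 ≤ ∑ x ∈ D, ∑ y ∈ D.filter (fun y => x < y), (f x - f y) := by
    intro f hf
    refine ⟨Finset.sum_nonneg fun x _ => by have := (hf.1 x).2; linarith,
      Finset.sum_nonneg fun x _ => (hf.1 x).1,
      Finset.sum_nonneg fun x _ => Finset.sum_nonneg fun y hy => ?_⟩
    simp only [Finset.mem_filter] at hy
    have := hf.2 hy.2.le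
    linarith
  have hub : ∀ f ∈ orderPolytope P, l f ≤ M := by
    intro f hf
    obtain ⟨n1, n2, n3⟩ := hnn f hf
    have := hslack f
    linarith
  have hmemI : ∀ x ∈ D, x ∉ I := by
    intro x hx; exact (Finset.mem_sdiff.mp hx).2
  have hmemJ : ∀ x ∈ D, x ∈ J := by
    intro x hx; exact (Finset.mem_sdiff.mp hx).1
  have hlI : l (rho P I) = M := by
    rw [hlev]
    have e1 : ∑ x ∈ I, rho P I x = (I.card : ℝ) := by
      rw [Finset.sum_congr rfl fun x hx => by unfold rho; rw [if_pos hx]]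
      simp
    have e2 : ∑ x ∈ Jᶜ, rho P I x = 0 := Finset.sum_eq_zero fun x hx => by
      unfold rho; rw [if_neg (fun h => (Finset.mem_compl.mp hx) (hIJ h))]
    have e3 : ∑ x ∈ D, ∑ y ∈ D.filter (fun y => x < y), (rho P I x - rho P I y) = 0 :=
      Finset.sum_eq_zero fun x hx => Finset.sum_eq_zero fun y hy => by
        simp only [Finset.mem_filter] at hy
        unfold rho
        rw [if_neg (hmemI x hx), if_neg (hmemI y hy.1)]
        ring
    rw [e1, e2, e3, hM]
    ring
  have hlJ : l (rho P J) = M := by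
    rw [hlev]
    have e1 : ∑ x ∈ I, rho P J x = (I.card : ℝ) := by
      rw [Finset.sum_congr rfl fun x hx => by unfold rho; rw [if_pos (hIJ hx)]]
      simp
    have e2 : ∑ x ∈ Jᶜ, rho P J x = 0 := Finset.sum_eq_zero fun x hx => by
      unfold rho; rw [if_neg (Finset.mem_compl.mp hx)]
    have e3 : ∑ x ∈ D, ∑ y ∈ D.filter (fun y => x < y), (rho P J x - rho P J y) = 0 :=
      Finset.sum_eq_zero fun x hx => Finset.sum_eq_zero fun y hy => by
        simp only [Finset.mem_filter] at hy
        unfold rho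
        rw [if_pos (hmemJ x hx), if_pos (hmemJ y hy.1)]
        ring
    rw [e1, e2, e3, hM]
    ring
  have hABne : rho P I ≠ rho P J := by
    intro h
    exact (hmemI z hz) (by rw [rho_inj h]; exact hmemJ z hz)
  refine isEdge_of_functional l M (rho_ideal_mem hI) (rho_ideal_mem hJ)
    convex_orderPolytope hABne hlI hlJ hub ?_
  intro f hf hlf
  obtain ⟨n1, n2, n3⟩ := hnn f hf
  have hs := hslack f
  rw [hlf] at hs
  have g1 : ∑ x ∈ I, (1 - f x) = 0 := by linarith
  have g2 : ∑ x ∈ Jᶜ, f x = 0 := by linarith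
  have g3 : ∑ x ∈ D, ∑ y ∈ D.filter (fun y => x < y), (f x - f y) = 0 := by linarith
  have hfI : ∀ x ∈ I, f x = 1 := by
    intro x hx
    have := (Finset.sum_eq_zero_iff_of_nonneg fun x _ => by
      have := (hf.1 x).2; linarith).mp g1 x hx
    linarith
  have hfJc : ∀ x, x ∉ J → f x = 0 := by
    intro x hx
    exact (Finset.sum_eq_zero_iff_of_nonneg fun x _ => (hf.1 x).1).mp g2 x
      (Finset.mem_compl.mpr hx)
  have hfD : ∀ x ∈ D, ∀ y ∈ D, x < y → f x = f y := by
    intro x hx y hy hxy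
    have houter := (Finset.sum_eq_zero_iff_of_nonneg fun x _ =>
      Finset.sum_nonneg fun y hy => by
        simp only [Finset.mem_filter] at hy
        have := hf.2 hy.2.le; linarith).mp g3 x hx
    have hinner := (Finset.sum_eq_zero_iff_of_nonneg fun y hy => by
      simp only [Finset.mem_filter] at hy
      have := hf.2 hy.2.le; linarith).mp houter y
      (Finset.mem_filter.mpr ⟨hy, hxy⟩)
    linarith
  have hfD' : ∀ x ∈ D, ∀ y ∈ D, (x = y ∨ x < y ∨ y < x) → f x = f y := by
    intro x hx y hy h
    rcases h with rfl | h | h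
    · rfl
    · exact hfD x hx y hy h
    · exact (hfD y hy x hx h).symm
  have hconst : ∀ x ∈ D, f x = f z := by
    intro x hx
    obtain ⟨w, hw, hxw, hwz⟩ := hconn x hx
    rw [hfD' x hx w hw hxw]
    exact hfD' w hw z hz hwz
  refine ⟨1 - f z, f z, by have := (hf.1 z).2; linarith, (hf.1 z).1, by ring, ?_⟩
  funext w
  simp only [Pi.add_apply, Pi.smul_apply, smul_eq_mul]
  by_cases hwI : w ∈ I
  · rw [hfI w hwI]
    unfold rho
    rw [if_pos hwI, if_pos (hIJ hwI)]
    ring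
  · by_cases hwJ : w ∈ J
    · have hwD : w ∈ D := Finset.mem_sdiff.mpr ⟨hwJ, hwI⟩
      rw [hconst w hwD]
      unfold rho
      rw [if_neg hwI, if_pos hwJ]
      ring
    · rw [hfJc w hwJ]
      unfold rho
      rw [if_neg hwI, if_neg hwJ]
      ring

end Aux4
section Aux5

variable {P : Type*} [Fintype P] [PartialOrder P] {r : P → ℕ}

lemma mem_level {i : ℕ} {x : P} : x ∈ level P r i ↔ r x = i := by
  simp [level]

lemma mem_genIdeal {A : Finset P} {x : P} : x ∈ genIdeal P A ↔ ∃ a ∈ A, x ≤ a := by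
  simp [genIdeal]

lemma genIdeal_ideal (A : Finset P) : IsIdealF P (genIdeal P A) := by
  intro x y hx hyx
  rw [mem_genIdeal] at hx ⊢
  obtain ⟨a, ha, hxa⟩ := hx
  exact ⟨a, ha, hyx.trans hxa⟩

lemma genIdeal_mono {A B : Finset P} (h : A ⊆ B) : genIdeal P A ⊆ genIdeal P B := by
  intro x hx
  rw [mem_genIdeal] at hx ⊢
  obtain ⟨a, ha, hxa⟩ := hx
  exact ⟨a, h ha, hxa⟩

variable (hlt : ∀ x y : P, x < y ↔ r x < r y)
include hlt

lemma le_iff_rank {x y : P} : x ≤ y ↔ x = y ∨ r x < r y := by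
  constructor
  · intro h
    rcases eq_or_lt_of_le h with h | h
    · exact Or.inl h
    · exact Or.inr ((hlt x y).mp h)
  · rintro (rfl | h)
    · exact le_rfl
    · exact ((hlt x y).mpr h).le

lemma subset_level_antichain {S : Finset P} {i : ℕ} (hS : S ⊆ level P r i) :
    IsAntichainF P S := by
  intro x hx y hy hne hle
  rcases (le_iff_rank hlt).mp hle with h | h
  · exact hne h
  · have hxl := mem_level.mp (hS hx)
    have hyl := mem_level.mp (hS hy)
    omega

lemma antichain_level {A : Finset P} (hA : IsAntichainF P A) {a0 : P} (ha0 : a0 ∈ A) :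
    A ⊆ level P r (r a0) := by
  intro x hx
  rw [mem_level]
  by_cases hx0 : x = a0
  · rw [hx0]
  · have h1 : ¬ x ≤ a0 := hA hx ha0 hx0
    have h2 : ¬ a0 ≤ x := hA ha0 hx (Ne.symm hx0)
    have h3 : ¬ r x < r a0 := fun h => h1 ((hlt x a0).mpr h).le
    have h4 : ¬ r a0 < r x := fun h => h2 ((hlt a0 x).mpr h).le
    omega

lemma genIdeal_level_mem {A : Finset P} {a : ℕ} (hA : A ⊆ level P r a)
    (hAne : A.Nonempty) {x : P} :
    x ∈ genIdeal P A ↔ r x < a ∨ x ∈ A := by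
  obtain ⟨a0, ha0⟩ := hAne
  have hra0 : r a0 = a := mem_level.mp (hA ha0)
  rw [mem_genIdeal]
  constructor
  · rintro ⟨c, hc, hxc⟩
    rcases (le_iff_rank hlt).mp hxc with rfl | h
    · exact Or.inr hc
    · exact Or.inl (by have := mem_level.mp (hA hc); omega)
  · rintro (h | h)
    · exact ⟨a0, ha0, (le_iff_rank hlt).mpr (Or.inr (by omega))⟩
    · exact ⟨x, h, le_rfl⟩

end Aux5
section Aux6

variable {P : Type*} [Fintype P] [PartialOrder P] {r : P → ℕ}

variable (hlt : ∀ x y : P, x < y ↔ r x < r y)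
include hlt

lemma CE_same_level {A B : Finset P} {i : ℕ} (hA : A ⊆ level P r i)
    (hB : B ⊆ level P r i) (hne : A ≠ B)
    (hCE : IsEdgeOf P (chainPolytope P) (rho P A) (rho P B)) :
    (∃ x, x ∉ A ∧ B = insert x A) ∨ (∃ x, x ∉ B ∧ A = insert x B) := by
  have hT : ((A \ B) ∪ (B \ A)).Nonempty := by
    rw [Finset.nonempty_iff_ne_empty]
    intro h
    rw [Finset.union_eq_empty, Finset.sdiff_eq_empty_iff_subset,
      Finset.sdiff_eq_empty_iff_subset] at h
    exact hne (Finset.Subset.antisymm h.1 h.2)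
  obtain ⟨x, hx⟩ := hT
  by_cases hsing : ∀ y ∈ (A \ B) ∪ (B \ A), y = x
  · rcases Finset.mem_union.mp hx with hxAB | hxBA
    · obtain ⟨hxA, hxB⟩ := Finset.mem_sdiff.mp hxAB
      right
      refine ⟨x, hxB, ?_⟩
      ext z
      rw [Finset.mem_insert]
      constructor
      · intro hz
        by_cases hzB : z ∈ B
        · exact Or.inr hzB
        · exact Or.inl (hsing z (Finset.mem_union_left _ (Finset.mem_sdiff.mpr ⟨hz, hzB⟩)))
      · rintro (rfl | hz)
        · exact hxA
        · by_contra hzA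
          have := hsing z (Finset.mem_union_right _ (Finset.mem_sdiff.mpr ⟨hz, hzA⟩))
          subst this
          exact hxB hz
    · obtain ⟨hxB, hxA⟩ := Finset.mem_sdiff.mp hxBA
      left
      refine ⟨x, hxA, ?_⟩
      ext z
      rw [Finset.mem_insert]
      constructor
      · intro hz
        by_cases hzA : z ∈ A
        · exact Or.inr hzA
        · exact Or.inl (hsing z (Finset.mem_union_right _ (Finset.mem_sdiff.mpr ⟨hz, hzA⟩)))
      · rintro (rfl | hz)
        · exact hxB
        · by_contra hzB
          have := hsing z (Finset.mem_union_left _ (Finset.mem_sdiff.mpr ⟨hz, hzB⟩))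
          subst this
          exact hxA hz
  · push_neg at hsing
    obtain ⟨y, hy, hyx⟩ := hsing
    exfalso
    rcases Finset.mem_union.mp hx with hxAB | hxBA
    · obtain ⟨hxA, hxB⟩ := Finset.mem_sdiff.mp hxAB
      refine not_edge_of_decomp (W1 := insert x B) (W2 := A.erase x)
        (rho_antichain_mem (subset_level_antichain hlt (i := i) ?_))
        (rho_antichain_mem (subset_level_antichain hlt (i := i)
          ((A.erase_subset x).trans hA)))
        ?_ ?_ ?_ hCE
      · intro z hz
        rcases Finset.mem_insert.mp hz with rfl | hz
        · exact hA hxA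
        · exact hB hz
      · intro z
        unfold rho
        by_cases hzx : z = x
        · subst hzx
          simp [hxA, hxB]
        · by_cases hzA : z ∈ A <;> by_cases hzB : z ∈ B <;>
            simp [Finset.mem_insert, Finset.mem_erase, hzx, hzA, hzB]
      · intro heq
        rcases Finset.mem_union.mp hy with hyAB | hyBA
        · obtain ⟨hyA, hyB⟩ := Finset.mem_sdiff.mp hyAB
          have : y ∈ insert x B := heq ▸ hyA
          rcases Finset.mem_insert.mp this with h | h
          · exact hyx h
          · exact hyB h
        · obtain ⟨hyB, hyA⟩ := Finset.mem_sdiff.mp hyBA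
          have : y ∈ insert x B := Finset.mem_insert.mpr (Or.inr hyB)
          rw [heq] at this
          exact hyA this
      · intro heq
        have : x ∈ insert x B := Finset.mem_insert_self x B
        rw [heq] at this
        exact hxB this
    · obtain ⟨hxB, hxA⟩ := Finset.mem_sdiff.mp hxBA
      refine not_edge_of_decomp (W1 := insert x A) (W2 := B.erase x)
        (rho_antichain_mem (subset_level_antichain hlt (i := i) ?_))
        (rho_antichain_mem (subset_level_antichain hlt (i := i)
          ((B.erase_subset x).trans hB)))
        ?_ ?_ ?_ hCE
      · intro z hz
        rcases Finset.mem_insert.mp hz with rfl | hz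
        · exact hB hxB
        · exact hA hz
      · intro z
        unfold rho
        by_cases hzx : z = x
        · subst hzx
          simp [hxA, hxB]
        · by_cases hzA : z ∈ A <;> by_cases hzB : z ∈ B <;>
            simp [Finset.mem_insert, Finset.mem_erase, hzx, hzA, hzB]
      · intro heq
        have : x ∈ insert x A := Finset.mem_insert_self x A
        rw [heq] at this
        exact hxA this
      · intro heq
        rcases Finset.mem_union.mp hy with hyAB | hyBA
        · obtain ⟨hyA, hyB⟩ := Finset.mem_sdiff.mp hyAB
          have : y ∈ insert x A := Finset.mem_insert.mpr (Or.inr hyA)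
          rw [heq] at this
          exact hyB this
        · obtain ⟨hyB, hyA⟩ := Finset.mem_sdiff.mp hyBA
          have : y ∈ insert x A := heq ▸ hyB
          rcases Finset.mem_insert.mp this with h | h
          · exact hyx h
          · exact hyA h

lemma OE_insert {B : Finset P} {x : P} (hx : x ∉ B) (hB : ∀ b ∈ B, r b = r x) :
    IsEdgeOf P (orderPolytope P) (rho P (genIdeal P B)) (rho P (genIdeal P (insert x B))) := by
  have hxI : x ∉ genIdeal P B := by
    rw [mem_genIdeal]
    rintro ⟨c, hc, hxc⟩
    rcases (le_iff_rank hlt).mp hxc with rfl | h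
    · exact hx hc
    · rw [hB c hc] at h
      omega
  have hxJ : x ∈ genIdeal P (insert x B) :=
    mem_genIdeal.mpr ⟨x, Finset.mem_insert_self x B, le_rfl⟩
  have hle : ∀ u ∈ genIdeal P (insert x B) \ genIdeal P B, u ≤ x := by
    intro u hu
    obtain ⟨huJ, huI⟩ := Finset.mem_sdiff.mp hu
    obtain ⟨c, hc, huc⟩ := mem_genIdeal.mp huJ
    rcases Finset.mem_insert.mp hc with rfl | hc
    · exact huc
    · exact absurd (mem_genIdeal.mpr ⟨c, hc, huc⟩) huI
  refine edgeO_of (genIdeal_ideal B) (genIdeal_ideal (insert x B))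
    (genIdeal_mono (Finset.subset_insert x B)) x
    (Finset.mem_sdiff.mpr ⟨hxJ, hxI⟩) ?_
  intro u hu
  refine ⟨x, Finset.mem_sdiff.mpr ⟨hxJ, hxI⟩, ?_, Or.inl rfl⟩
  rcases eq_or_lt_of_le (hle u hu) with h | h
  · exact Or.inl h
  · exact Or.inr (Or.inl h)

lemma forward_same {A B : Finset P} {i : ℕ}
    (hA : A ⊆ level P r i) (hB : B ⊆ level P r i) (hne : A ≠ B)
    (hCE : IsEdgeOf P (chainPolytope P) (rho P A) (rho P B))
    (hnOE : ¬ IsEdgeOf P (orderPolytope P) (rho P (genIdeal P A)) (rho P (genIdeal P B))) :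
    False := by
  rcases CE_same_level hlt hA hB hne hCE with ⟨x, hxA, hBeq⟩ | ⟨x, hxB, hAeq⟩
  · refine hnOE ?_
    rw [hBeq]
    refine OE_insert hlt hxA ?_
    intro b hb
    have h1 := mem_level.mp (hA hb)
    have h2 : r x = i := mem_level.mp (hB (hBeq ▸ Finset.mem_insert_self x A))
    omega
  · refine hnOE (edge_symm ?_)
    rw [hAeq]
    refine OE_insert hlt hxB ?_
    intro b hb
    have h1 := mem_level.mp (hB hb)
    have h2 : r x = i := mem_level.mp (hA (hAeq ▸ Finset.mem_insert_self x B))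
    omega

end Aux6
section Aux7

variable {P : Type*} [Fintype P] [PartialOrder P] {r : P → ℕ}

lemma estarC_symm {A B : Finset P} (h : EstarC P B A) : EstarC P A B := by
  obtain ⟨hB, hA, hne, hCE, hnOE⟩ := h
  exact ⟨hA, hB, hne.symm, edge_symm hCE, fun h' => hnOE (edge_symm h')⟩

variable (hlt : ∀ x y : P, x < y ↔ r x < r y)
include hlt

lemma forward_lt {n : ℕ} (hrn : ∀ x, r x ≤ n) (hsurj : ∀ i, i ≤ n → ∃ x, r x = i)
    {A B : Finset P} {a b : ℕ}
    (hA : A ⊆ level P r a) (hB : B ⊆ level P r b)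
    (hAne : A.Nonempty) (hBne : B.Nonempty) (hab : a < b)
    (hnOE : ¬ IsEdgeOf P (orderPolytope P) (rho P (genIdeal P A)) (rho P (genIdeal P B))) :
    A = level P r a ∧ b = a + 1 ∧ 2 ≤ B.card := by
  obtain ⟨b0, hb0⟩ := hBne
  have hAr : ∀ x ∈ A, r x = a := fun x hx => mem_level.mp (hA hx)
  have hBr : ∀ x ∈ B, r x = b := fun x hx => mem_level.mp (hB hx)
  have hbn : b ≤ n := by have := hrn b0; have := hBr b0 hb0; omega
  have hImem : ∀ x, x ∈ genIdeal P A ↔ r x < a ∨ x ∈ A :=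
    fun x => genIdeal_level_mem hlt hA hAne
  have hJmem : ∀ x, x ∈ genIdeal P B ↔ r x < b ∨ x ∈ B :=
    fun x => genIdeal_level_mem hlt hB ⟨b0, hb0⟩
  have hIJ : genIdeal P A ⊆ genIdeal P B := by
    intro x hx
    rcases (hImem x).mp hx with h | h
    · exact (hJmem x).mpr (Or.inl (by omega))
    · exact (hJmem x).mpr (Or.inl (by have := hAr x h; omega))
  have hDmem : ∀ x, x ∈ genIdeal P B \ genIdeal P A ↔
      ((r x < b ∨ x ∈ B) ∧ a ≤ r x ∧ x ∉ A) := by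
    intro x
    rw [Finset.mem_sdiff, hJmem x, hImem x]
    constructor
    · rintro ⟨h1, h2⟩
      push_neg at h2
      exact ⟨h1, h2.1, h2.2⟩
    · rintro ⟨h1, h2, h3⟩
      exact ⟨h1, by rintro (h | h); omega; exact h3 h⟩
  have hBD : ∀ x ∈ B, x ∈ genIdeal P B \ genIdeal P A := by
    intro x hx
    refine (hDmem x).mpr ⟨Or.inr hx, by have := hBr x hx; omega,
      fun h => by have := hAr x h; have := hBr x hx; omega⟩
  by_cases hb1 : b = a + 1
  · by_cases hAfull : A = level P r a
    · by_cases hcard : 2 ≤ B.card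
      · exact ⟨hAfull, hb1, hcard⟩
      · exfalso
        apply hnOE
        have hBsub : ∀ y ∈ B, y = b0 :=
          fun y hy => Finset.card_le_one.mp (by omega) y hy b0 hb0
        refine edgeO_of (genIdeal_ideal A) (genIdeal_ideal B) hIJ b0 (hBD b0 hb0) ?_
        intro u hu
        obtain ⟨h1, h2, h3⟩ := (hDmem u).mp hu
        have huB : u ∈ B := by
          rcases h1 with h1 | h1
          · exfalso
            apply h3
            rw [hAfull, mem_level]
            omega
          · exact h1
        exact ⟨b0, hBD b0 hb0, Or.inl (hBsub u huB), Or.inl rfl⟩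
    · exfalso
      apply hnOE
      have hz : ∃ z, r z = a ∧ z ∉ A := by
        by_contra h
        push_neg at h
        refine hAfull (Finset.Subset.antisymm hA fun z hz => h z (mem_level.mp hz))
      obtain ⟨z, hza, hzA⟩ := hz
      have hzD : z ∈ genIdeal P B \ genIdeal P A :=
        (hDmem z).mpr ⟨Or.inl (by omega), by omega, hzA⟩
      refine edgeO_of (genIdeal_ideal A) (genIdeal_ideal B) hIJ z hzD ?_
      intro u hu
      obtain ⟨h1, h2, h3⟩ := (hDmem u).mp hu
      by_cases hua : r u = a
      · refine ⟨b0, hBD b0 hb0, Or.inr (Or.inl ((hlt u b0).mpr ?_)),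
          Or.inr (Or.inr ((hlt z b0).mpr ?_))⟩
        · have := hBr b0 hb0; omega
        · have := hBr b0 hb0; omega
      · have huB : u ∈ B := by
          rcases h1 with h1 | h1
          · omega
          · exact h1
        exact ⟨z, hzD, Or.inr (Or.inr ((hlt z u).mpr (by have := hBr u huB; omega))),
          Or.inl rfl⟩
  · exfalso
    apply hnOE
    obtain ⟨z, hz⟩ := hsurj (a + 1) (by omega)
    have hzD : z ∈ genIdeal P B \ genIdeal P A :=
      (hDmem z).mpr ⟨Or.inl (by omega), by omega, fun h => by have := hAr z h; omega⟩
    have hw : ∃ w, w ∈ genIdeal P B \ genIdeal P A ∧ r w = a + 2 := by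
      rcases eq_or_lt_of_le (show a + 2 ≤ b by omega) with h | h
      · exact ⟨b0, hBD b0 hb0, by have := hBr b0 hb0; omega⟩
      · obtain ⟨w, hwr⟩ := hsurj (a + 2) (by omega)
        exact ⟨w, (hDmem w).mpr ⟨Or.inl (by omega), by omega,
          fun hc => by have := hAr w hc; omega⟩, hwr⟩
    obtain ⟨w, hwD, hwr⟩ := hw
    refine edgeO_of (genIdeal_ideal A) (genIdeal_ideal B) hIJ z hzD ?_
    intro u hu
    obtain ⟨h1, h2, h3⟩ := (hDmem u).mp hu
    by_cases hu1 : r u = a + 1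
    · exact ⟨w, hwD, Or.inr (Or.inl ((hlt u w).mpr (by omega))),
        Or.inr (Or.inr ((hlt z w).mpr (by omega)))⟩
    · refine ⟨z, hzD, ?_, Or.inl rfl⟩
      rcases Nat.lt_or_ge (r u) (r z) with h | h
      · exact Or.inr (Or.inl ((hlt u z).mpr h))
      · have : r z < r u := by omega
        exact Or.inr (Or.inr ((hlt z u).mpr this))

lemma backward_aux {n : ℕ} (hsurj : ∀ i, i ≤ n → ∃ x, r x = i)
    {A B : Finset P} {ℓ : ℕ} (hl1 : 1 ≤ ℓ) (hln : ℓ ≤ n)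
    (hA : IsAntichainF P A) (hB : IsAntichainF P B) (hne : A ≠ B)
    (hAl : A = level P r (ℓ - 1)) (hBl : B ⊆ level P r ℓ) (hcard : 2 ≤ B.card) :
    EstarC P A B := by
  have hAsub : A ⊆ level P r (ℓ - 1) := by rw [hAl]
  have hAne : A.Nonempty := by
    obtain ⟨x, hx⟩ := hsurj (ℓ - 1) (by omega)
    exact ⟨x, by rw [hAl]; exact mem_level.mpr hx⟩
  have hBne : B.Nonempty := Finset.card_pos.mp (by omega)
  have hAr : ∀ x ∈ A, r x = ℓ - 1 := fun x hx => mem_level.mp (hAsub hx)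
  have hBr : ∀ x ∈ B, r x = ℓ := fun x hx => mem_level.mp (hBl hx)
  have hdisj : ∀ x ∈ A, x ∉ B := fun x hx hxB => by
    have := hAr x hx; have := hBr x hxB; omega
  have hCE := edgeC_of hA hB hAne hBne hdisj
    (fun x hx y hy => (hlt x y).mpr (by have := hAr x hx; have := hBr y hy; omega))
  obtain ⟨x0, hx0, y0, hy0, hxy0⟩ := Finset.one_lt_card.mp (by omega : 1 < B.card)
  have hImem : ∀ u, u ∈ genIdeal P A ↔ r u ≤ ℓ - 1 := by
    intro u
    rw [genIdeal_level_mem hlt hAsub hAne]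
    constructor
    · rintro (h | h)
      · omega
      · have := hAr u h; omega
    · intro h
      rcases Nat.lt_or_ge (r u) (ℓ - 1) with h' | h'
      · exact Or.inl h'
      · refine Or.inr ?_
        rw [hAl]
        exact mem_level.mpr (by omega)
  have hJmem : ∀ u, u ∈ genIdeal P B ↔ (u ∈ genIdeal P A ∨ u ∈ B) := by
    intro u
    rw [genIdeal_level_mem hlt hBl hBne, hImem u]
    constructor
    · rintro (h | h)
      · exact Or.inl (by omega)
      · exact Or.inr h
    · rintro (h | h)
      · exact Or.inl (by omega)
      · exact Or.inr h
  have hx0I : x0 ∉ genIdeal P A := fun h => by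
    have := (hImem x0).mp h; have := hBr x0 hx0; omega
  have hW1 : IsIdealF P (insert x0 (genIdeal P A)) := by
    intro u v hu hvu
    rcases Finset.mem_insert.mp hu with rfl | hu
    · rcases (le_iff_rank hlt).mp hvu with rfl | h
      · exact Finset.mem_insert_self _ _
      · refine Finset.mem_insert_of_mem ((hImem v).mpr ?_)
        have := hBr u hx0; omega
    · exact Finset.mem_insert_of_mem (genIdeal_ideal A hu hvu)
  have hW2 : IsIdealF P (genIdeal P A ∪ B.erase x0) := by
    intro u v hu hvu
    rcases Finset.mem_union.mp hu with hu | hu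
    · exact Finset.mem_union_left _ (genIdeal_ideal A hu hvu)
    · rcases (le_iff_rank hlt).mp hvu with rfl | h
      · exact Finset.mem_union_right _ hu
      · refine Finset.mem_union_left _ ((hImem v).mpr ?_)
        have := hBr u (Finset.mem_of_mem_erase hu); omega
  refine ⟨hA, hB, hne, hCE, ?_⟩
  refine not_edge_of_decomp (rho_ideal_mem hW1) (rho_ideal_mem hW2) ?_ ?_ ?_
  · intro z
    unfold rho
    by_cases hzx : z = x0
    · subst hzx
      have hn1 : z ∉ genIdeal P A ∪ B.erase z := by
        intro h
        rcases Finset.mem_union.mp h with h | h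
        · exact hx0I h
        · exact (Finset.mem_erase.mp h).1 rfl
      rw [if_pos (Finset.mem_insert_self z _), if_neg hn1, if_neg hx0I,
        if_pos ((hJmem z).mpr (Or.inr hx0))]
      norm_num
    · by_cases hzI : z ∈ genIdeal P A
      · rw [if_pos (Finset.mem_insert_of_mem hzI), if_pos (Finset.mem_union_left _ hzI),
          if_pos hzI, if_pos ((hJmem z).mpr (Or.inl hzI))]
      · have hn1 : z ∉ insert x0 (genIdeal P A) := by
          intro h
          rcases Finset.mem_insert.mp h with h | h
          · exact hzx h
          · exact hzI h
        by_cases hzB : z ∈ B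
        · rw [if_neg hn1, if_pos (Finset.mem_union_right _
            (Finset.mem_erase.mpr ⟨hzx, hzB⟩)), if_neg hzI,
            if_pos ((hJmem z).mpr (Or.inr hzB))]
        · have hn2 : z ∉ genIdeal P A ∪ B.erase x0 := by
            intro h
            rcases Finset.mem_union.mp h with h | h
            · exact hzI h
            · exact hzB (Finset.mem_of_mem_erase h)
          have hn3 : z ∉ genIdeal P B := by
            intro h
            rcases (hJmem z).mp h with h | h
            · exact hzI h
            · exact hzB h
          rw [if_neg hn1, if_neg hn2, if_neg hzI, if_neg hn3]
  · intro heq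
    exact hx0I (heq ▸ Finset.mem_insert_self x0 _)
  · intro heq
    have : y0 ∈ insert x0 (genIdeal P A) := by
      rw [heq]
      exact (hJmem y0).mpr (Or.inr hy0)
    rcases Finset.mem_insert.mp this with h | h
    · exact hxy0 h.symm
    · have := (hImem y0).mp h
      have := hBr y0 hy0
      omega

end Aux7
/-- In a maximal ranked poset of rank `n`, `{A, B} ∈ E*_C(P)` iff there
is `1 ≤ ℓ ≤ n` with (after possibly swapping) `A = P_{ℓ-1}`, `B ⊆ P_ℓ` and `|B| ≥ 2`. -/
theorem mem_EstarC_iff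
    (r : P → ℕ) (n : ℕ) (hr : IsMaxRanked P r n)
    (A B : Finset P) (hA : IsAntichainF P A) (hB : IsAntichainF P B) (hne : A ≠ B) :
    EstarC P A B ↔
      ∃ ℓ : ℕ, 1 ≤ ℓ ∧ ℓ ≤ n ∧
        ((A = level P r (ℓ - 1) ∧ B ⊆ level P r ℓ ∧ 2 ≤ B.card) ∨
         (B = level P r (ℓ - 1) ∧ A ⊆ level P r ℓ ∧ 2 ≤ A.card)) := by
  obtain ⟨hrn, hsurj, hlt⟩ := hr
  constructor
  · rintro ⟨-, -, -, hCE, hnOE⟩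
    rcases Finset.eq_empty_or_nonempty A with hAe | ⟨a0, ha0⟩
    · rcases Finset.eq_empty_or_nonempty B with hBe | ⟨b0, hb0⟩
      · exact absurd (hAe.trans hBe.symm) hne
      · exact (forward_same hlt (i := r b0) (by rw [hAe]; exact Finset.empty_subset _)
          (antichain_level hlt hB hb0) hne hCE hnOE).elim
    · rcases Finset.eq_empty_or_nonempty B with hBe | ⟨b0, hb0⟩
      · exact (forward_same hlt (i := r a0) (antichain_level hlt hA ha0)
          (by rw [hBe]; exact Finset.empty_subset _) hne hCE hnOE).elim
      · have hAsub := antichain_level hlt hA ha0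
        have hBsub := antichain_level hlt hB hb0
        rcases Nat.lt_trichotomy (r a0) (r b0) with h | h | h
        · obtain ⟨h1, h2, h3⟩ := forward_lt hlt hrn hsurj hAsub hBsub ⟨a0, ha0⟩
            ⟨b0, hb0⟩ h hnOE
          refine ⟨r b0, by omega, by have := hrn b0; omega, Or.inl ⟨?_, hBsub, h3⟩⟩
          rw [h1]
          congr 1
          omega
        · exact (forward_same hlt (i := r a0) hAsub (by rw [h]; exact hBsub)
            hne hCE hnOE).elim
        · obtain ⟨h1, h2, h3⟩ := forward_lt hlt hrn hsurj hBsub hAsub ⟨b0, hb0⟩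
            ⟨a0, ha0⟩ h (fun he => hnOE (edge_symm he))
          refine ⟨r a0, by omega, by have := hrn a0; omega, Or.inr ⟨?_, hAsub, h3⟩⟩
          rw [h1]
          congr 1
          omega
  · rintro ⟨ℓ, hl1, hln, hcase | hcase⟩
    · exact backward_aux hlt hsurj hl1 hln hA hB hne hcase.1 hcase.2.1 hcase.2.2
    · exact estarC_symm (backward_aux hlt hsurj hl1 hln hB hA hne.symm hcase.1
        hcase.2.1 hcase.2.2)
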